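/- Let φ(z) = (z² − 3)/(2z), extended to ℙ¹(ℚ) = ℚ ∪ {∞} by φ(0) = ∞ and φ(∞) = ∞. Then the set of rational preperiodic points of φ is exactly {0, ∞, 1, −1, 3, −3}, with orbit structure: ∞ is a fixed point, φ(0) = ∞, {1, −1} is a cycle of length 2 (φ(1) = −1 and φ(−1) = 1), φ(3) = 1, and φ(−3) = −1. In particular φ has exactly six rational preperiodic points. -/

import Mathlib

/-!
Under `w = (z + √-3)/(z - √-3)` the map `φ` becomes `w ↦ w²`, so the trace `t = w + w⁻¹`,
which is the rational number `2(z² − 3)/(z² + 3)` (and `2` at `∞`), evolves by `t ↦ t² − 2`.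
Along an orbit of `t ↦ t² − 2` the denominators of rational points square, so a preperiodic
`t` is an integer. Since `−2 ≤ t < 2`, this leaves `t ∈ {−2, −1, 0, 1}`, i.e. `z² ∈ {0, 1, 3, 9}`,
and `z² = 3` has no rational solution.
-/

/-- The map `φ(z) = (z² − 3)/(2z)` on `ℙ¹(ℚ)`, with `φ(0) = ∞` and
`φ(∞) = ∞`. -/
def phi16 : Option ℚ → Option ℚ
  | none => none
  | some x => if x = 0 then none else some ((x ^ 2 - 3) / (2 * x))

/-- A point is preperiodic for a self-map `f` if two distinct iterates of `f`
agree on it, i.e. its forward orbit is finite. -/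
def IsPreperiodicPt {X : Type*} (f : X → X) (α : X) : Prop :=
  ∃ i j : ℕ, i < j ∧ f^[i] α = f^[j] α

theorem Function.Semiconj.isPreperiodicPt {X Y : Type*} {f : X → X} {F : Y → Y} {g : X → Y}
    (h : Function.Semiconj g f F) {α : X} (hα : IsPreperiodicPt f α) :
    IsPreperiodicPt F (g α) := by
  obtain ⟨i, j, hij, hα⟩ := hα
  exact ⟨i, j, hij, by rw [← (h.iterate_right i).eq, ← (h.iterate_right j).eq, hα]⟩

theorem Rat.den_iterate_sq_add_intCast (c : ℤ) (t : ℚ) (n : ℕ) :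
    ((fun s : ℚ => s ^ 2 + c)^[n] t).den = t.den ^ 2 ^ n := by
  induction n with
  | zero => simp
  | succ n ih =>
    rw [Function.iterate_succ_apply', Rat.add_intCast_den, Rat.den_pow, ih, ← pow_mul, pow_succ]

theorem IsPreperiodicPt.den_eq_one_of_sq_add_intCast {c : ℤ} {t : ℚ}
    (h : IsPreperiodicPt (fun s : ℚ => s ^ 2 + c) t) : t.den = 1 := by
  obtain ⟨i, j, hij, hij_eq⟩ := h
  have hden := congrArg Rat.den hij_eq
  rw [Rat.den_iterate_sq_add_intCast, Rat.den_iterate_sq_add_intCast] at hden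
  by_contra hne
  have h2 : 2 ≤ t.den := by have := t.den_pos; omega
  exact (Nat.pow_lt_pow_right (by norm_num) hij).ne (Nat.pow_right_injective h2 hden)

theorem Rat.sq_ne_three (x : ℚ) : x ^ 2 ≠ 3 := by
  intro h
  have : IsSquare (3 : ℚ) := ⟨x, by rw [← h, sq]⟩
  obtain ⟨r, hr⟩ := Rat.isSquare_ofNat_iff.mp this
  exact Nat.not_exists_sq (m := 1) (by norm_num) (by norm_num) ⟨r, hr.symm⟩

def phi16Trace : Option ℚ → ℚ
  | none => 2
  | some x => (2 * x ^ 2 - 6) / (x ^ 2 + 3)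

theorem phi16Trace_semiconj :
    Function.Semiconj phi16Trace phi16 (fun t : ℚ => t ^ 2 + (-2 : ℤ)) := by
  rintro (_ | x)
  · norm_num [phi16, phi16Trace]
  · by_cases hx : x = 0
    · subst hx
      norm_num [phi16, phi16Trace]
    · simp only [phi16, phi16Trace, hx, if_false]
      field_simp
      push_cast
      ring

theorem mem_of_phi16Trace_den_eq_one {α : Option ℚ} (h : (phi16Trace α).den = 1) :
    α ∈ ({some 0, none, some 1, some (-1), some 3, some (-3)} : Set (Option ℚ)) := by
  rcases α with _ | x
  · simp
  have hx3 : 0 < x ^ 2 + 3 := by positivity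
  have hsq : x ^ 2 * (2 - phi16Trace (some x)) = 3 * (2 + phi16Trace (some x)) := by
    rw [phi16Trace]; field_simp; ring
  have hlo : -2 ≤ phi16Trace (some x) := by
    rw [phi16Trace, le_div_iff₀ hx3]; nlinarith [sq_nonneg x]
  have hhi : phi16Trace (some x) < 2 := by
    rw [phi16Trace, div_lt_iff₀ hx3]; nlinarith
  rw [← Rat.coe_int_num_of_den_eq_one h] at hsq hlo hhi
  obtain ⟨n, hlo, hhi, hsq⟩ : ∃ n : ℤ, -2 ≤ n ∧ n < 2 ∧ x ^ 2 * (2 - n) = 3 * (2 + n) :=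
    ⟨_, by exact_mod_cast hlo, by exact_mod_cast hhi, hsq⟩
  obtain rfl | rfl | rfl | rfl : n = -2 ∨ n = -1 ∨ n = 0 ∨ n = 1 := by omega
  · have : x = 0 := by simpa using hsq
    simp [this]
  · have hx : x ^ 2 = 1 ^ 2 := by push_cast at hsq; linarith
    obtain rfl | rfl := sq_eq_sq_iff_eq_or_eq_neg.mp hx <;> simp
  · exact absurd (by push_cast at hsq; linarith) (Rat.sq_ne_three x)
  · have hx : x ^ 2 = 3 ^ 2 := by push_cast at hsq; linarith
    obtain rfl | rfl := sq_eq_sq_iff_eq_or_eq_neg.mp hx <;> simp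

/-- The set of rational preperiodic points of `φ(z) = (z² − 3)/(2z)` is
exactly `{0, ∞, 1, −1, 3, −3}` (six points), with `∞` fixed, `φ(0) = ∞`,
`φ(1) = −1`, `φ(−1) = 1`, `φ(3) = 1`, and `φ(−3) = −1`. -/
theorem phi16_preperiodic_points :
    {α : Option ℚ | IsPreperiodicPt phi16 α} =
        ({some 0, none, some 1, some (-1), some 3, some (-3)} :
          Set (Option ℚ)) ∧
      {α : Option ℚ | IsPreperiodicPt phi16 α}.ncard = 6 ∧
      phi16 none = none ∧ phi16 (some 0) = none ∧
      phi16 (some 1) = some (-1) ∧ phi16 (some (-1)) = some 1 ∧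
      phi16 (some 3) = some 1 ∧ phi16 (some (-3)) = some (-1) := by
  have hvalues : phi16 none = none ∧ phi16 (some 0) = none ∧
      phi16 (some 1) = some (-1) ∧ phi16 (some (-1)) = some 1 ∧
      phi16 (some 3) = some 1 ∧ phi16 (some (-3)) = some (-1) := by
    norm_num [phi16]
  have hset : {α : Option ℚ | IsPreperiodicPt phi16 α} =
      ({some 0, none, some 1, some (-1), some 3, some (-3)} : Set (Option ℚ)) := by
    ext α
    refine ⟨fun h => mem_of_phi16Trace_den_eq_one
      (phi16Trace_semiconj.isPreperiodicPt h).den_eq_one_of_sq_add_intCast, ?_⟩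
    rintro (rfl | rfl | rfl | rfl | rfl | rfl)
    · exact ⟨1, 2, one_lt_two, by norm_num [phi16]⟩
    · exact ⟨0, 1, one_pos, rfl⟩
    · exact ⟨0, 2, two_pos, by norm_num [phi16]⟩
    · exact ⟨0, 2, two_pos, by norm_num [phi16]⟩
    · exact ⟨1, 3, by norm_num, by norm_num [phi16]⟩
    · exact ⟨1, 3, by norm_num, by norm_num [phi16]⟩
  refine ⟨hset, ?_, hvalues⟩
  rw [hset, Set.ncard_eq_toFinset_card']
  rfl
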